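/- If (ω₁, ω₂, ω₃) generates a round contact sphere on a 3-manifold with Reeb fields R₁, R₂, R₃, then d ω₁(R₂, R₃) = dω₂(R₃, R₁) = dω₃(R₁, R₂), and for any normalized (λ₁,λ₂,λ₃), (λ₁ω₁+λ₂ω₂+λ₃ω₃) ∧ d(λ₁ω₁+λ₂ω₂+λ₃ω₃)(R₁,R₂,R₃) = dω₁(R₂,R₃); in particular every round contact sphere on a 3-manifold is taut. -/

import Mathlib

open scoped BigOperators

noncomputable section

abbrev E3 : Type := Fin 3 → ℝ

/-- Exterior derivative of a 1-form on ℝ³, evaluated at `x` on `u, v`. -/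
def extd (ω : E3 → E3 →L[ℝ] ℝ) (x u v : E3) : ℝ :=
  fderiv ℝ (fun y => ω y v) x u - fderiv ℝ (fun y => ω y u) x v

/-- Evaluation of the 3-form `a ∧ b` (degrees 1, 2) on three vectors. -/
def wedge12 (a : E3 →L[ℝ] ℝ) (b : E3 → E3 → ℝ) (v : Fin 3 → E3) : ℝ :=
  (1 / 2 : ℝ) * ∑ σ : Equiv.Perm (Fin 3),
    ((Equiv.Perm.sign σ : ℤ) : ℝ) * a (v (σ 0)) * b (v (σ 1)) (v (σ 2))

lemma extd_antisymm (ω : E3 → E3 →L[ℝ] ℝ) (x u v : E3) :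
    extd ω x u v = - extd ω x v u := by
  simp only [extd]; ring

lemma fderiv_comb (f₁ f₂ f₃ : E3 → ℝ) (hd₁ : Differentiable ℝ f₁)
    (hd₂ : Differentiable ℝ f₂) (hd₃ : Differentiable ℝ f₃) (l₁ l₂ l₃ : ℝ) (x u : E3) :
    fderiv ℝ (fun y => l₁ * f₁ y + l₂ * f₂ y + l₃ * f₃ y) x u =
      l₁ * fderiv ℝ f₁ x u + l₂ * fderiv ℝ f₂ x u + l₃ * fderiv ℝ f₃ x u := by
  have h : HasFDerivAt (fun y => l₁ * f₁ y + l₂ * f₂ y + l₃ * f₃ y)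
      (l₁ • fderiv ℝ f₁ x + l₂ • fderiv ℝ f₂ x + l₃ • fderiv ℝ f₃ x) x :=
    (((hd₁ x).hasFDerivAt.const_mul l₁).add ((hd₂ x).hasFDerivAt.const_mul l₂)).add
      ((hd₃ x).hasFDerivAt.const_mul l₃)
  rw [h.fderiv]
  simp [smul_eq_mul]

lemma extd_comb (ω₁ ω₂ ω₃ : E3 → E3 →L[ℝ] ℝ)
    (hd₁ : ∀ w, Differentiable ℝ (fun y => ω₁ y w))
    (hd₂ : ∀ w, Differentiable ℝ (fun y => ω₂ y w))
    (hd₃ : ∀ w, Differentiable ℝ (fun y => ω₃ y w))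
    (l₁ l₂ l₃ : ℝ) (x u v : E3) :
    extd (fun y => l₁ • ω₁ y + l₂ • ω₂ y + l₃ • ω₃ y) x u v =
      l₁ * extd ω₁ x u v + l₂ * extd ω₂ x u v + l₃ * extd ω₃ x u v := by
  have e : ∀ w : E3, (fun y => (l₁ • ω₁ y + l₂ • ω₂ y + l₃ • ω₃ y) w) =
      fun y => l₁ * ω₁ y w + l₂ * ω₂ y w + l₃ * ω₃ y w := by
    intro w; funext y; simp [smul_eq_mul]
  simp only [extd, e, fderiv_comb _ _ _ (hd₁ _) (hd₂ _) (hd₃ _)]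
  ring

lemma extd_lin (ω : E3 → E3 →L[ℝ] ℝ) (hd : ∀ w, Differentiable ℝ (fun y => ω y w))
    (l₁ l₂ l₃ : ℝ) (x u₁ u₂ u₃ v : E3) :
    extd ω x (l₁ • u₁ + l₂ • u₂ + l₃ • u₃) v =
      l₁ * extd ω x u₁ v + l₂ * extd ω x u₂ v + l₃ * extd ω x u₃ v := by
  have e : (fun y => ω y (l₁ • u₁ + l₂ • u₂ + l₃ • u₃)) =
      fun y => l₁ * ω y u₁ + l₂ * ω y u₂ + l₃ * ω y u₃ := by
    funext y; simp [smul_eq_mul]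
  simp only [extd, e, fderiv_comb _ _ _ (hd _) (hd _) (hd _), map_add, map_smul,
    smul_eq_mul]
  ring

lemma wedge12_eval (a : E3 →L[ℝ] ℝ) (b : E3 → E3 → ℝ) (u v w : E3)
    (hb : ∀ p q, b p q = - b q p) :
    wedge12 a b ![u, v, w] = a u * b v w + a v * b w u + a w * b u v := by
  rw [wedge12, show (Finset.univ : Finset (Equiv.Perm (Fin 3))) =
    {1, Equiv.swap 0 1, Equiv.swap 0 2, Equiv.swap 1 2,
     Equiv.swap 0 1 * Equiv.swap 1 2, Equiv.swap 1 2 * Equiv.swap 0 1} from by decide]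
  rw [Finset.sum_insert (by decide), Finset.sum_insert (by decide),
      Finset.sum_insert (by decide), Finset.sum_insert (by decide),
      Finset.sum_insert (by decide), Finset.sum_singleton]
  have s1 : ∀ i j : Fin 3, i ≠ j → Equiv.Perm.sign (Equiv.swap i j) = -1 :=
    fun i j h => Equiv.Perm.sign_swap h
  simp only [Equiv.Perm.sign_one, Equiv.Perm.sign_mul,
    s1 0 1 (by decide), s1 0 2 (by decide), s1 1 2 (by decide),
    Equiv.Perm.one_apply, Equiv.Perm.mul_apply,
    show (Equiv.swap (0:Fin 3) 1) 0 = 1 from by decide,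
    show (Equiv.swap (0:Fin 3) 1) 1 = 0 from by decide,
    show (Equiv.swap (0:Fin 3) 1) 2 = 2 from by decide,
    show (Equiv.swap (0:Fin 3) 2) 0 = 2 from by decide,
    show (Equiv.swap (0:Fin 3) 2) 1 = 1 from by decide,
    show (Equiv.swap (0:Fin 3) 2) 2 = 0 from by decide,
    show (Equiv.swap (1:Fin 3) 2) 0 = 0 from by decide,
    show (Equiv.swap (1:Fin 3) 2) 1 = 2 from by decide,
    show (Equiv.swap (1:Fin 3) 2) 2 = 1 from by decide,
    Matrix.cons_val_zero, Matrix.cons_val_one, Matrix.head_cons,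
    show ((![u,v,w] : Fin 3 → E3) 2) = w from rfl]
  push_cast
  rw [hb u w, hb v u, hb w v]
  ring

/-- If `(ω₁, ω₂, ω₃)` generates a round contact sphere on a 3-manifold with
Reeb fields `R₁, R₂, R₃`, then `dω₁(R₂,R₃) = dω₂(R₃,R₁) = dω₃(R₁,R₂)`, and for
any normalized `(λ₁,λ₂,λ₃)`,
`(Σλᵢωᵢ) ∧ d(Σλᵢωᵢ) (R₁,R₂,R₃) = dω₁(R₂,R₃)`; in particular every round
contact sphere on a 3-manifold is taut. -/
theorem stmt9 (ω₁ ω₂ ω₃ : E3 → E3 →L[ℝ] ℝ)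
    (h₁ : ContDiff ℝ (⊤ : ℕ∞) ω₁) (h₂ : ContDiff ℝ (⊤ : ℕ∞) ω₂) (h₃ : ContDiff ℝ (⊤ : ℕ∞) ω₃)
    (R₁ R₂ R₃ : E3 → E3)
    (hR₁ : ∀ x, ω₁ x (R₁ x) = 1 ∧ ∀ v, extd ω₁ x (R₁ x) v = 0)
    (hR₂ : ∀ x, ω₂ x (R₂ x) = 1 ∧ ∀ v, extd ω₂ x (R₂ x) v = 0)
    (hR₃ : ∀ x, ω₃ x (R₃ x) = 1 ∧ ∀ v, extd ω₃ x (R₃ x) v = 0)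
    (hsphere : ∀ l₁ l₂ l₃ : ℝ, l₁ ^ 2 + l₂ ^ 2 + l₃ ^ 2 = 1 → ∀ x,
      ∃ v : Fin 3 → E3,
        wedge12 (l₁ • ω₁ x + l₂ • ω₂ x + l₃ • ω₃ x)
          (extd (fun y => l₁ • ω₁ y + l₂ • ω₂ y + l₃ • ω₃ y) x) v ≠ 0)
    (hround : ∀ l₁ l₂ l₃ : ℝ, l₁ ^ 2 + l₂ ^ 2 + l₃ ^ 2 = 1 → ∀ x,
      (l₁ • ω₁ x + l₂ • ω₂ x + l₃ • ω₃ x)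
          (l₁ • R₁ x + l₂ • R₂ x + l₃ • R₃ x) = 1 ∧
      ∀ v, extd (fun y => l₁ • ω₁ y + l₂ • ω₂ y + l₃ • ω₃ y) x
          (l₁ • R₁ x + l₂ • R₂ x + l₃ • R₃ x) v = 0) :
    (∀ x, extd ω₁ x (R₂ x) (R₃ x) = extd ω₂ x (R₃ x) (R₁ x) ∧
          extd ω₁ x (R₂ x) (R₃ x) = extd ω₃ x (R₁ x) (R₂ x)) ∧
    (∀ l₁ l₂ l₃ : ℝ, l₁ ^ 2 + l₂ ^ 2 + l₃ ^ 2 = 1 → ∀ x,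
      wedge12 (l₁ • ω₁ x + l₂ • ω₂ x + l₃ • ω₃ x)
          (extd (fun y => l₁ • ω₁ y + l₂ • ω₂ y + l₃ • ω₃ y) x)
          ![R₁ x, R₂ x, R₃ x]
        = extd ω₁ x (R₂ x) (R₃ x)) := by
  have hd₁ : ∀ w, Differentiable ℝ (fun y => ω₁ y w) :=
    fun w => (h₁.differentiable (by simp)).clm_apply (differentiable_const w)
  have hd₂ : ∀ w, Differentiable ℝ (fun y => ω₂ y w) :=
    fun w => (h₂.differentiable (by simp)).clm_apply (differentiable_const w)
  have hd₃ : ∀ w, Differentiable ℝ (fun y => ω₃ y w) :=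
    fun w => (h₃.differentiable (by simp)).clm_apply (differentiable_const w)
  have hdc : ∀ l₁ l₂ l₃ : ℝ, ∀ w,
      Differentiable ℝ (fun y => (l₁ • ω₁ y + l₂ • ω₂ y + l₃ • ω₃ y) w) := by
    intro l₁ l₂ l₃ w
    have e : (fun y => (l₁ • ω₁ y + l₂ • ω₂ y + l₃ • ω₃ y) w) =
        fun y => l₁ * ω₁ y w + l₂ * ω₂ y w + l₃ * ω₃ y w := by
      funext y; simp [smul_eq_mul]
    rw [e]
    exact (((hd₁ w).const_mul l₁).add ((hd₂ w).const_mul l₂)).add ((hd₃ w).const_mul l₃)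
  -- cross identities on exterior derivatives
  have hn : ((3:ℝ)/5) ^ 2 + ((4:ℝ)/5) ^ 2 + (0:ℝ) ^ 2 = 1 := by norm_num
  have E12 : ∀ x v, extd ω₁ x (R₂ x) v + extd ω₂ x (R₁ x) v = 0 := by
    intro x v
    have hb := ((hround (3/5) (4/5) 0 hn x).2) v
    rw [extd_lin _ (hdc _ _ _) _ _ _ _ _ _ _,
        extd_comb ω₁ ω₂ ω₃ hd₁ hd₂ hd₃, extd_comb ω₁ ω₂ ω₃ hd₁ hd₂ hd₃,
        extd_comb ω₁ ω₂ ω₃ hd₁ hd₂ hd₃, (hR₁ x).2 v, (hR₂ x).2 v] at hb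
    linarith
  have E13 : ∀ x v, extd ω₁ x (R₃ x) v + extd ω₃ x (R₁ x) v = 0 := by
    intro x v
    have hn' : ((3:ℝ)/5) ^ 2 + (0:ℝ) ^ 2 + ((4:ℝ)/5) ^ 2 = 1 := by norm_num
    have hb := ((hround (3/5) 0 (4/5) hn' x).2) v
    rw [extd_lin _ (hdc _ _ _) _ _ _ _ _ _ _,
        extd_comb ω₁ ω₂ ω₃ hd₁ hd₂ hd₃, extd_comb ω₁ ω₂ ω₃ hd₁ hd₂ hd₃,
        extd_comb ω₁ ω₂ ω₃ hd₁ hd₂ hd₃, (hR₁ x).2 v, (hR₃ x).2 v] at hb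
    linarith
  have E23 : ∀ x v, extd ω₂ x (R₃ x) v + extd ω₃ x (R₂ x) v = 0 := by
    intro x v
    have hn' : ((0:ℝ)) ^ 2 + ((3:ℝ)/5) ^ 2 + ((4:ℝ)/5) ^ 2 = 1 := by norm_num
    have hb := ((hround 0 (3/5) (4/5) hn' x).2) v
    rw [extd_lin _ (hdc _ _ _) _ _ _ _ _ _ _,
        extd_comb ω₁ ω₂ ω₃ hd₁ hd₂ hd₃, extd_comb ω₁ ω₂ ω₃ hd₁ hd₂ hd₃,
        extd_comb ω₁ ω₂ ω₃ hd₁ hd₂ hd₃, (hR₂ x).2 v, (hR₃ x).2 v] at hb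
    linarith
  have key : ∀ x, extd ω₁ x (R₂ x) (R₃ x) = extd ω₂ x (R₃ x) (R₁ x) ∧
      extd ω₁ x (R₂ x) (R₃ x) = extd ω₃ x (R₁ x) (R₂ x) := by
    intro x
    have a1 := extd_antisymm ω₂ x (R₃ x) (R₁ x)
    have a2 := extd_antisymm ω₁ x (R₃ x) (R₂ x)
    have e1 := E12 x (R₃ x)
    have e2 := E13 x (R₂ x)
    constructor <;> linarith
  refine ⟨key, ?_⟩
  intro l₁ l₂ l₃ hnl x
  have hbanti : ∀ p q, extd (fun y => l₁ • ω₁ y + l₂ • ω₂ y + l₃ • ω₃ y) x p q =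
      - extd (fun y => l₁ • ω₁ y + l₂ • ω₂ y + l₃ • ω₃ y) x q p :=
    fun p q => extd_antisymm _ x p q
  rw [wedge12_eval _ _ _ _ _ hbanti]
  set c := extd ω₁ x (R₂ x) (R₃ x) with hc
  have z2 : extd ω₂ x (R₂ x) (R₃ x) = 0 := (hR₂ x).2 (R₃ x)
  have z3 : extd ω₃ x (R₂ x) (R₃ x) = 0 := by
    have := extd_antisymm ω₃ x (R₂ x) (R₃ x)
    have h0 := (hR₃ x).2 (R₂ x)
    linarith
  have z1 : extd ω₁ x (R₃ x) (R₁ x) = 0 := by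
    have := extd_antisymm ω₁ x (R₃ x) (R₁ x)
    have h0 := (hR₁ x).2 (R₃ x)
    linarith
  have z4 : extd ω₃ x (R₃ x) (R₁ x) = 0 := (hR₃ x).2 (R₁ x)
  have z5 : extd ω₁ x (R₁ x) (R₂ x) = 0 := (hR₁ x).2 (R₂ x)
  have z6 : extd ω₂ x (R₁ x) (R₂ x) = 0 := by
    have := extd_antisymm ω₂ x (R₁ x) (R₂ x)
    have h0 := (hR₂ x).2 (R₁ x)
    linarith
  have hb1 : extd (fun y => l₁ • ω₁ y + l₂ • ω₂ y + l₃ • ω₃ y) x (R₂ x) (R₃ x)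
      = l₁ * c := by
    rw [extd_comb ω₁ ω₂ ω₃ hd₁ hd₂ hd₃, z2, z3, ← hc]; ring
  have hb2 : extd (fun y => l₁ • ω₁ y + l₂ • ω₂ y + l₃ • ω₃ y) x (R₃ x) (R₁ x)
      = l₂ * c := by
    rw [extd_comb ω₁ ω₂ ω₃ hd₁ hd₂ hd₃, z1, z4, ← (key x).1, ← hc]; ring
  have hb3 : extd (fun y => l₁ • ω₁ y + l₂ • ω₂ y + l₃ • ω₃ y) x (R₁ x) (R₂ x)
      = l₃ * c := by
    rw [extd_comb ω₁ ω₂ ω₃ hd₁ hd₂ hd₃, z5, z6, ← (key x).2, ← hc]; ring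
  rw [hb1, hb2, hb3]
  have h1 := (hround l₁ l₂ l₃ hnl x).1
  simp only [ContinuousLinearMap.add_apply, ContinuousLinearMap.coe_smul',
    Pi.smul_apply, map_add, map_smul, smul_eq_mul] at h1 ⊢
  linear_combination c * h1

end
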